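/- arXiv:1201.4687 — 2 statements merged into one kernel-verified Lean document; each statement's English description precedes it below -/
import Mathlib

section
/- Let G be a Hausdorff topological group and H a closed subgroup such that G/H is compact and the quotient map p_H : G → G/H satisfies: every compact subset of G/H is the image of a compact subset of G. Then the inclusion (H, E_{C(H)}) → (G, E_{C(G)}) is a coarse equivalence of group-compact coarse structures. -/
open Set Pointwise

/-- A coarse structure on `X`: a collection of entourages containing the diagonal,
closed under subsets, finite unions, inverses and compositions. -/
def IsCoarse {X : Type*} (E : Set (Set (X × X))) : Prop :=
  ({p : X × X | p.1 = p.2} ∈ E) ∧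
  (∀ A ∈ E, ∀ B : Set (X × X), B ⊆ A → B ∈ E) ∧
  (∀ A ∈ E, ∀ B ∈ E, A ∪ B ∈ E) ∧
  (∀ A ∈ E, Prod.swap '' A ∈ E) ∧
  (∀ A ∈ E, ∀ B ∈ E, {p : X × X | ∃ y, (p.1, y) ∈ A ∧ (y, p.2) ∈ B} ∈ E)

/-- `G(A × B)`: the `G`-saturation of `A × B` under the diagonal left action. -/
def GProd {G : Type*} [Group G] (A B : Set G) : Set (G × G) :=
  {p | ∃ g : G, ∃ a ∈ A, ∃ b ∈ B, p = (g * a, g * b)}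

/-- A subset of `G × G` is `G`-invariant for the diagonal left action. -/
def GInvariant {G : Type*} [Group G] (E : Set (G × G)) : Prop :=
  ∀ g : G, ∀ p ∈ E, (g * p.1, g * p.2) ∈ E

/-- The coarse structure associated to a family `F` of subsets of a group `G`. -/
def EF {G : Type*} [Group G] (F : Set (Set G)) : Set (Set (G × G)) :=
  {E | ∃ A ∈ F, E ⊆ GProd A A}

/-- A generating family for a compatible coarse structure on a group `G`. -/
structure IsGenFamily {G : Type*} [Group G] (F : Set (Set G)) : Prop where
  exists_nonempty : ∃ A ∈ F, A.Nonempty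
  union_mem : ∀ A ∈ F, ∀ B ∈ F, A ∪ B ∈ F
  mul_mem : ∀ A ∈ F, ∀ B ∈ F, A * B ∈ F
  inv_mem : ∀ A ∈ F, A⁻¹ ∈ F

/-- Image of an entourage under the shear map `(x, y) ↦ y⁻¹ * x`. -/
def shearImage {G : Type*} [Group G] (E : Set (G × G)) : Set G :=
  (fun p : G × G => p.2⁻¹ * p.1) '' E

/-- The family of shear-map images of the entourages of `E`. -/
def FofE {G : Type*} [Group G] (E : Set (Set (G × G))) : Set (Set G) :=
  shearImage '' E

/-- The completion of a family of subsets of `G`. -/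
def hatF {G : Type*} (F : Set (Set G)) : Set (Set G) :=
  {A | ∃ B ∈ F, A ⊆ B}

/-- A family `U` of subsets of `X` is `L`-disjoint. -/
def LDisjoint {X : Type*} (L : Set (X × X)) (U : Set (Set X)) : Prop :=
  ∀ A ∈ U, ∀ B ∈ U, A ≠ B → ∀ a ∈ A, ∀ b ∈ B, (a, b) ∉ L

/-- A family `U` of subsets of `X` is uniformly bounded for the coarse structure `E`. -/
def UnifBounded {X : Type*} (E : Set (Set (X × X))) (U : Set (Set X)) : Prop :=
  ∃ M ∈ E, ∀ A ∈ U, A ×ˢ A ⊆ M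

/-- `asdimLE E n` : the asymptotic dimension of the coarse structure `E` is at most `n`. -/
def asdimLE {X : Type*} (E : Set (Set (X × X))) (n : ℕ) : Prop :=
  ∀ L ∈ E, ∃ U : Fin (n + 1) → Set (Set X),
    (⋃ i, ⋃₀ U i) = Set.univ ∧ (∀ i, LDisjoint L (U i)) ∧ UnifBounded E (⋃ i, U i)

/-- A coarsely uniform (bornologous) map between coarse spaces. -/
def CoarselyUniform {X Y : Type*} (E : Set (Set (X × X))) (E' : Set (Set (Y × Y)))
    (f : X → Y) : Prop :=
  ∀ A ∈ E, Prod.map f f '' A ∈ E'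

/-- Two maps into a coarse space are close. -/
def Close {S X : Type*} (E : Set (Set (X × X))) (p q : S → X) : Prop :=
  {r : X × X | ∃ s : S, r = (p s, q s)} ∈ E

/-- A coarse embedding between coarse spaces. -/
def CoarseEmbedding {X Y : Type*} (E : Set (Set (X × X))) (E' : Set (Set (Y × Y)))
    (f : X → Y) : Prop :=
  CoarselyUniform E E' f ∧ ∀ A ∈ E', Prod.map f f ⁻¹' A ∈ E

/-- A bounded subset of a coarse space: a set of the form `A(x)`. -/
def IsBddSet {X : Type*} (E : Set (Set (X × X))) (B : Set X) : Prop :=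
  ∃ A ∈ E, ∃ x : X, B = {y | (y, x) ∈ A}

/-- A coarse space is connected if every point of `X × X` lies in some entourage. -/
def ConnectedCoarse {X : Type*} (E : Set (Set (X × X))) : Prop :=
  ∀ p : X × X, ∃ A ∈ E, p ∈ A

/-- The family `F|_H = { A ∩ H : A ∈ F }`, viewed as subsets of the subgroup `H`. -/
def restrictFamily {G : Type*} [Group G] (F : Set (Set G)) (H : Subgroup G) : Set (Set H) :=
  (fun A => (Subtype.val ⁻¹' A : Set H)) '' F

/-!
Since `G ⧸ H` is compact, it is the image of a compact `K ⊆ G`, so every `g` can be moved into `H`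
by a right translation `g ↦ g * κ g` with `κ g ∈ K`. This map is a coarse inverse of the inclusion:
it moves points by the compact amount `K`, and distorts entourages built on a compact `A` only up to
`K⁻¹ * (A⁻¹ * A) * K`, whose trace on the closed subgroup `H` is compact in `H`.
-/

section GProd

variable {G : Type*} [Group G]

lemma inv_mul_mem_of_mem_GProd {A B : Set G} {p : G × G} (hp : p ∈ GProd A B) :
    p.2⁻¹ * p.1 ∈ B⁻¹ * A := by
  obtain ⟨g, a, ha, b, hb, rfl⟩ := hp
  exact ⟨b⁻¹, inv_mem_inv.mpr hb, a, ha, by simp [mul_assoc]⟩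

lemma image_GProd_subset {G' : Type*} [Group G'] (f : G →* G') (A B : Set G) :
    Prod.map f f '' GProd A B ⊆ GProd (f '' A) (f '' B) := by
  rintro _ ⟨_, ⟨g, a, ha, b, hb, rfl⟩, rfl⟩
  exact ⟨f g, f a, mem_image_of_mem f ha, f b, mem_image_of_mem f hb, by simp⟩

end GProd

section Compact

variable {G : Type*} [Group G] [TopologicalSpace G]

lemma mem_EF_isCompact_of_inv_mul_mem {E : Set (G × G)} {C : Set G} (hC : IsCompact C)
    (h : ∀ p ∈ E, p.2⁻¹ * p.1 ∈ C) : E ∈ EF {K : Set G | IsCompact K} := by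
  refine ⟨C ∪ {1}, hC.union isCompact_singleton, fun p hp => ?_⟩
  exact ⟨p.2, p.2⁻¹ * p.1, Or.inl (h p hp), 1, Or.inr rfl, by simp⟩

lemma mem_EF_isCompact_subgroup_of_inv_mul_mem {H : Subgroup G} (hH : IsClosed (H : Set G))
    {E : Set (H × H)} {C : Set G} (hC : IsCompact C) (h : ∀ p ∈ E, (p.2 : G)⁻¹ * p.1 ∈ C) :
    E ∈ EF {K : Set H | IsCompact K} :=
  mem_EF_isCompact_of_inv_mul_mem (hH.isClosedEmbedding_subtypeVal.isCompact_preimage hC)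
    fun p hp => by simpa using h p hp

lemma coarselyUniform_of_continuous {G' : Type*} [Group G'] [TopologicalSpace G'] (f : G →* G')
    (hf : Continuous f) :
    CoarselyUniform (EF {K : Set G | IsCompact K}) (EF {K : Set G' | IsCompact K}) f := by
  rintro E ⟨A, hA, hEA⟩
  exact ⟨f '' A, hA.image hf, (image_mono hEA).trans (image_GProd_subset f A A)⟩

end Compact

lemma exists_mul_mem_of_image_mk_eq_univ {G : Type*} [Group G] {H : Subgroup G} {K : Set G}
    (hK : QuotientGroup.mk '' K = (univ : Set (G ⧸ H))) (g : G) : ∃ k ∈ K, g * k ∈ H := by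
  obtain ⟨k, hk, hkg⟩ : ((g⁻¹ : G) : G ⧸ H) ∈ QuotientGroup.mk '' K := hK ▸ mem_univ _
  refine ⟨k, hk, ?_⟩
  simpa using H.inv_mem (QuotientGroup.eq.mp hkg)

section Retraction

variable {G : Type*} [Group G] [TopologicalSpace G] {H : Subgroup G}

def retraction (κ : G → G) (hκH : ∀ g, g * κ g ∈ H) : G → H :=
  fun g => ⟨g * κ g, hκH g⟩

variable {K : Set G} {κ : G → G}

lemma retraction_coarselyUniform [IsTopologicalGroup G] (hH : IsClosed (H : Set G))
    (hK : IsCompact K) (hκK : ∀ g, κ g ∈ K) (hκH : ∀ g, g * κ g ∈ H) :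
    CoarselyUniform (EF {K : Set G | IsCompact K}) (EF {K : Set H | IsCompact K})
      (retraction κ hκH) := by
  rintro E ⟨A, hA, hEA⟩
  refine mem_EF_isCompact_subgroup_of_inv_mul_mem hH
    ((hK.inv.mul (hA.inv.mul hA)).mul hK) ?_
  rintro _ ⟨⟨x, y⟩, hxy, rfl⟩
  have hyx : y⁻¹ * x ∈ A⁻¹ * A := inv_mul_mem_of_mem_GProd (hEA hxy)
  have key := mul_mem_mul (mul_mem_mul (inv_mem_inv.mpr (hκK y)) hyx) (hκK x)
  simpa [retraction, mul_assoc] using key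

lemma close_retraction_comp_val (hH : IsClosed (H : Set G)) (hK : IsCompact K)
    (hκK : ∀ g, κ g ∈ K) (hκH : ∀ g, g * κ g ∈ H) :
    Close (EF {K : Set H | IsCompact K}) (retraction κ hκH ∘ Subtype.val) id := by
  refine mem_EF_isCompact_subgroup_of_inv_mul_mem hH hK ?_
  rintro _ ⟨h, rfl⟩
  simpa [retraction] using hκK h

lemma close_val_comp_retraction (hK : IsCompact K) (hκK : ∀ g, κ g ∈ K)
    (hκH : ∀ g, g * κ g ∈ H) :
    Close (EF {K : Set G | IsCompact K}) (Subtype.val ∘ retraction κ hκH) id := by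
  refine mem_EF_isCompact_of_inv_mul_mem hK ?_
  rintro _ ⟨g, rfl⟩
  simpa [retraction] using hκK g

end Retraction

theorem stmt_12_general {G : Type*} [Group G] [TopologicalSpace G] [IsTopologicalGroup G]
    (H : Subgroup G) (hclosed : IsClosed (H : Set G)) [CompactSpace (G ⧸ H)]
    (hPropK : ∀ K : Set (G ⧸ H), IsCompact K →
      ∃ K' : Set G, IsCompact K' ∧ QuotientGroup.mk '' K' = K) :
    CoarselyUniform (EF {K : Set H | IsCompact K}) (EF {K : Set G | IsCompact K})
      (Subtype.val : H → G) ∧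
    ∃ ψ : G → H,
      CoarselyUniform (EF {K : Set G | IsCompact K}) (EF {K : Set H | IsCompact K}) ψ ∧
      Close (EF {K : Set H | IsCompact K}) (ψ ∘ Subtype.val) id ∧
      Close (EF {K : Set G | IsCompact K}) (Subtype.val ∘ ψ) id := by
  obtain ⟨K, hK, hKH⟩ := hPropK univ isCompact_univ
  choose κ hκK hκH using exists_mul_mem_of_image_mk_eq_univ hKH
  exact ⟨coarselyUniform_of_continuous H.subtype continuous_subtype_val, retraction κ hκH,
    retraction_coarselyUniform hclosed hK hκK hκH, close_retraction_comp_val hclosed hK hκK hκH,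
    close_val_comp_retraction hK hκK hκH⟩

theorem stmt_12 {G : Type*} [Group G] [TopologicalSpace G] [IsTopologicalGroup G] [T2Space G]
    (H : Subgroup G) (hclosed : IsClosed (H : Set G)) [CompactSpace (G ⧸ H)]
    (hPropK : ∀ K : Set (G ⧸ H), IsCompact K →
      ∃ K' : Set G, IsCompact K' ∧ QuotientGroup.mk '' K' = K) :
    CoarselyUniform (EF {K : Set H | IsCompact K}) (EF {K : Set G | IsCompact K})
      (Subtype.val : H → G) ∧
    ∃ ψ : G → H,
      CoarselyUniform (EF {K : Set G | IsCompact K}) (EF {K : Set H | IsCompact K}) ψ ∧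
      Close (EF {K : Set H | IsCompact K}) (ψ ∘ Subtype.val) id ∧
      Close (EF {K : Set G | IsCompact K}) (Subtype.val ∘ ψ) id :=
  stmt_12_general H hclosed hPropK
end

section
/- Let G be a group with generating family F such that (G, E_F) is connected, and let H ⊆ G be a subgroup (with F|_H nonempty). Then asdim(H, E_{F|_H}) ≤ asdim(G, E_F). -/
open Set Pointwise

/-!
A subgroup `H` sits in `G` as a coarse embedding: entourages of `E_{F|_H}` are entourages of
`E_F`, and conversely if `x, y ∈ H` satisfy `(x, y) = (g a, g b)` with `a, b ∈ A`, then
`(x, y) = y · (b⁻¹ a, b⁻¹ b)` is an `H`-translate of a pair in `(A⁻¹ A) ∩ H`. Pulling back a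
cover of `G` witnessing `asdim ≤ n` along a coarse embedding gives such a cover of `H`.
-/

theorem CoarseEmbedding.asdimLE {X Y : Type*} {E : Set (Set (X × X))}
    {E' : Set (Set (Y × Y))} {f : X → Y} (hf : CoarseEmbedding E E' f) {n : ℕ}
    (hY : asdimLE E' n) : asdimLE E n := by
  intro L hL
  obtain ⟨U, hcov, hdisj, M, hM, hMU⟩ := hY _ (hf.1 L hL)
  refine ⟨fun i => preimage f '' U i, ?_, ?_, Prod.map f f ⁻¹' M, hf.2 M hM, ?_⟩
  · refine eq_univ_of_forall fun x => ?_
    obtain ⟨_, ⟨i, rfl⟩, B, hB, hxB⟩ :=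
      (hcov ▸ mem_univ (f x) : f x ∈ ⋃ i, ⋃₀ U i)
    exact mem_iUnion.2 ⟨i, B.preimage f, mem_image_of_mem _ hB, hxB⟩
  · rintro i _ ⟨B₁, hB₁, rfl⟩ _ ⟨B₂, hB₂, rfl⟩ hne a ha b hb hab
    exact hdisj i B₁ hB₁ B₂ hB₂ (ne_of_apply_ne _ hne) (f a) ha (f b) hb
      ⟨(a, b), hab, rfl⟩
  · rintro _ ⟨_, ⟨i, rfl⟩, B, hB, rfl⟩ p ⟨h₁, h₂⟩
    exact hMU B (mem_iUnion.2 ⟨i, hB⟩) ⟨h₁, h₂⟩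

section Subgroup

variable {G : Type*} [Group G]

theorem coarselyUniform_subtype_val (F : Set (Set G)) (H : Subgroup G) :
    CoarselyUniform (EF (restrictFamily F H)) (EF F) Subtype.val := by
  rintro L ⟨_, ⟨A, hA, rfl⟩, hLA⟩
  refine ⟨A, hA, ?_⟩
  rintro _ ⟨p, hp, rfl⟩
  obtain ⟨g, a, ha, b, hb, rfl⟩ := hLA hp
  exact ⟨g, a, ha, b, hb, rfl⟩

theorem mk_mem_GProd_preimage_inv_mul {H : Subgroup G} {A : Set G} {x y : H}
    (h : ((x : G), (y : G)) ∈ GProd A A) :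
    (x, y) ∈ GProd (Subtype.val ⁻¹' (A⁻¹ * A) : Set H) (Subtype.val ⁻¹' (A⁻¹ * A)) := by
  obtain ⟨g, a, ha, b, hb, hxy⟩ := h
  obtain ⟨hx, hy⟩ := Prod.mk.inj hxy
  refine ⟨y, y⁻¹ * x, ⟨b⁻¹, inv_mem_inv.2 hb, a, ha, ?_⟩,
    1, ⟨b⁻¹, inv_mem_inv.2 hb, b, hb, ?_⟩, ?_⟩
  · simp [hx, hy, mul_assoc]
  · simp
  · simp

theorem IsGenFamily.preimage_subtype_val_mem_EF {F : Set (Set G)} (hF : IsGenFamily F)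
    (H : Subgroup G) {M : Set (G × G)} (hM : M ∈ EF F) :
    Prod.map Subtype.val Subtype.val ⁻¹' M ∈ EF (restrictFamily F H) := by
  obtain ⟨A, hA, hMA⟩ := hM
  refine ⟨_, ⟨A⁻¹ * A, hF.mul_mem _ (hF.inv_mem _ hA) _ hA, rfl⟩, ?_⟩
  exact fun p hp => mk_mem_GProd_preimage_inv_mul (hMA hp)

theorem IsGenFamily.coarseEmbedding_subtype_val {F : Set (Set G)} (hF : IsGenFamily F)
    (H : Subgroup G) : CoarseEmbedding (EF (restrictFamily F H)) (EF F) Subtype.val :=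
  ⟨coarselyUniform_subtype_val F H, fun _ hM => hF.preimage_subtype_val_mem_EF H hM⟩

end Subgroup

theorem stmt_16_general {G : Type*} [Group G] (F : Set (Set G)) (hF : IsGenFamily F)
    (H : Subgroup G) (n : ℕ)
    (hG : asdimLE (EF F) n) :
    asdimLE (EF (restrictFamily F H)) n :=
  (hF.coarseEmbedding_subtype_val H).asdimLE hG

theorem stmt_16 {G : Type*} [Group G] (F : Set (Set G)) (hF : IsGenFamily F)
    (hconn : ConnectedCoarse (EF F)) (H : Subgroup G)
    (hne : ∃ A ∈ F, (A ∩ (H : Set G)).Nonempty) (n : ℕ)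
    (hG : asdimLE (EF F) n) :
    asdimLE (EF (restrictFamily F H)) n :=
  stmt_16_general F hF H n hG
end
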